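/- Let ξ be a positive semidefinite operator on A ⊗ B with partial trace ξ^B = tr_A(ξ). Then tr[ξ²] ≤ |A| · tr[(ξ^B)²]. -/

import Mathlib

open Matrix Kronecker
open scoped ComplexOrder

/-- The square root of a positive semidefinite matrix, as defined in Mathlib (Dec 2024),
since removed from Mathlib. -/
noncomputable def Matrix.PosSemidef.sqrt {n : Type*} [Fintype n] [DecidableEq n]
    {A : Matrix n n ℂ} (hA : A.PosSemidef) : Matrix n n ℂ :=
  (hA.1.eigenvectorUnitary : Matrix n n ℂ) *
    diagonal (fun i => ((Real.sqrt (hA.1.eigenvalues i) : ℝ) : ℂ)) *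
  (star hA.1.eigenvectorUnitary : Matrix n n ℂ)

noncomputable def traceNorm {n m : Type*} [Fintype n] [Fintype m] [DecidableEq m]
    (M : Matrix n m ℂ) : ℝ :=
  ((Matrix.posSemidef_conjTranspose_mul_self M).sqrt.trace).re

noncomputable def ptraceFst {a b : Type*} [Fintype a]
    (M : Matrix (a × b) (a × b) ℂ) : Matrix b b ℂ :=
  Matrix.of fun i j => ∑ k, M (k, i) (k, j)

noncomputable def ptraceSnd {a b : Type*} [Fintype b]
    (M : Matrix (a × b) (a × b) ℂ) : Matrix a a ℂ :=
  Matrix.of fun i j => ∑ k, M (i, k) (j, k)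

/-!
Pairing the operator inequality `ξ ≤ |A| (1 ⊗ ξ^B)` with `ξ` gives the claim, because
`tr[ξ (1 ⊗ ρ)] = tr[ξ^B ρ]` and `tr[ξ X] ≥ 0` for positive `X`. The operator inequality goes
through the pinching `P(ξ) = ∑ₖ (|k⟩⟨k| ⊗ 1) ξ (|k⟩⟨k| ⊗ 1)`: `|A| P(ξ) - ξ` is the Schur product
of `ξ` with `(|A| 1 - J) ⊗ J`, where `J` is the all-ones matrix, hence positive; and
`1 ⊗ ξ^B - P(ξ) = ∑ₘ (1 - |m⟩⟨m|) ⊗ ξₘₘ` is positive because the diagonal blocks `ξₘₘ` are.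
-/

namespace Matrix

variable {𝕜 : Type*} [RCLike 𝕜] {n a b : Type*} [Fintype n] [Fintype a] [DecidableEq a]
  [Fintype b]

open scoped MatrixOrder in
theorem PosSemidef.trace_mul_nonneg {A B : Matrix n n 𝕜} (hA : A.PosSemidef)
    (hB : B.PosSemidef) : 0 ≤ (A * B).trace := by
  classical
  obtain ⟨X, rfl⟩ := CStarAlgebra.nonneg_iff_eq_star_mul_self.mp hA.nonneg
  rw [star_eq_conjTranspose, Matrix.mul_assoc, trace_mul_comm]
  exact (hB.mul_mul_conjTranspose_same X).trace_nonneg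

theorem posSemidef_card_smul_one_sub_ones :
    ((Fintype.card a : 𝕜) • 1 - of fun _ _ => 1 : Matrix a a 𝕜).PosSemidef := by
  let v : a → a → a → 𝕜 := fun k l => Pi.single k 1 - Pi.single l 1
  have hsum : ∑ k, ∑ l, vecMulVec (v k l) (star (v k l)) =
      (2 : 𝕜) • ((Fintype.card a : 𝕜) • 1 - of fun _ _ => 1) := by
    ext p q
    simp only [v, sum_apply, vecMulVec_apply, Pi.star_apply, Pi.sub_apply, star_sub,
      Pi.single_apply]
    by_cases h : p = q <;> simp [h, mul_sub, Finset.sum_sub_distrib, mul_ite, Finset.sum_ite_eq]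
      <;> ring
  have hpsd : (∑ k, ∑ l, vecMulVec (v k l) (star (v k l))).PosSemidef :=
    posSemidef_sum _ fun k _ => posSemidef_sum _ fun l _ => posSemidef_vecMulVec_self_star _
  rw [hsum] at hpsd
  simpa using hpsd.smul (show (0 : 𝕜) ≤ 2⁻¹ by positivity)

/-- The pinching of `M` along the first tensor factor: the entries `M (k, i) (l, j)` with
`k ≠ l` are replaced by `0`. -/
def pinchFst (M : Matrix (a × b) (a × b) 𝕜) : Matrix (a × b) (a × b) 𝕜 :=
  M ⊙ (1 ⊗ₖ of fun _ _ => 1)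

theorem PosSemidef.card_smul_pinchFst_sub {M : Matrix (a × b) (a × b) 𝕜} (hM : M.PosSemidef) :
    ((Fintype.card a : 𝕜) • pinchFst M - M).PosSemidef := by
  have hones : (of fun _ _ => 1 : Matrix b b 𝕜).PosSemidef := by
    simpa [vecMulVec] using posSemidef_vecMulVec_self_star (1 : b → 𝕜)
  have heq : (Fintype.card a : 𝕜) • pinchFst M - M =
      M ⊙ (((Fintype.card a : 𝕜) • 1 - of fun _ _ => 1) ⊗ₖ of fun _ _ => 1) := by
    ext p q
    simp [pinchFst, one_apply, mul_sub, mul_comm]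
  rw [heq]
  exact hM.hadamard (posSemidef_card_smul_one_sub_ones.kronecker hones)

theorem trace_mul_one_kronecker (M : Matrix (a × b) (a × b) ℂ) (N : Matrix b b ℂ) :
    (M * (1 ⊗ₖ N)).trace = (ptraceFst M * N).trace := by
  simp only [trace, diag_apply, mul_apply, kroneckerMap_apply, one_apply, ite_mul, one_mul,
    zero_mul, mul_ite, mul_zero, Fintype.sum_prod_type, Finset.sum_ite_irrel,
    Finset.sum_const_zero, Finset.sum_ite_eq', Finset.mem_univ, ↓reduceIte, ptraceFst, of_apply,
    Finset.sum_mul]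
  rw [Finset.sum_comm]
  exact Finset.sum_congr rfl fun _ _ => Finset.sum_comm

theorem PosSemidef.one_kronecker_ptraceFst_sub_pinchFst {M : Matrix (a × b) (a × b) ℂ}
    (hM : M.PosSemidef) : (1 ⊗ₖ ptraceFst M - pinchFst M).PosSemidef := by
  have heq : 1 ⊗ₖ ptraceFst M - pinchFst M =
      ∑ m, diagonal (fun k => if k = m then 0 else 1) ⊗ₖ M.submatrix (Prod.mk m) (Prod.mk m) := by
    ext ⟨k, i⟩ ⟨l, j⟩
    by_cases hkl : k = l
    · subst hkl
      simp only [ptraceFst, pinchFst, sub_apply, kroneckerMap_apply, one_apply_eq, of_apply,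
        one_mul, hadamard_apply, mul_one, sum_apply, diagonal_apply_eq, submatrix_apply, ite_mul,
        zero_mul, Finset.sum_ite, Finset.sum_const_zero, zero_add]
      rw [← Finset.sum_erase_eq_sub (Finset.mem_univ _), Finset.filter_ne]
    · simp [pinchFst, ptraceFst, sum_apply, hkl]
  rw [heq]
  refine posSemidef_sum _ fun m _ => PosSemidef.kronecker ?_ (hM.submatrix _)
  exact PosSemidef.diagonal fun k => by split_ifs <;> simp

theorem PosSemidef.card_smul_one_kronecker_ptraceFst_sub {M : Matrix (a × b) (a × b) ℂ}
    (hM : M.PosSemidef) : ((Fintype.card a : ℂ) • (1 ⊗ₖ ptraceFst M) - M).PosSemidef := by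
  have hsum := hM.card_smul_pinchFst_sub.add
    (hM.one_kronecker_ptraceFst_sub_pinchFst.smul (Nat.cast_nonneg (α := ℂ) (Fintype.card a)))
  rwa [smul_sub, sub_add_sub_cancel'] at hsum

end Matrix

/-- For positive semidefinite `ξ` on `A ⊗ B`, `tr[ξ²] ≤ |A| tr[(ξ^B)²]`. -/
theorem trace_sq_le_card_mul_trace_sq_ptrace
    {a b : Type*} [Fintype a] [Fintype b]
    (ξ : Matrix (a × b) (a × b) ℂ) (hξ : ξ.PosSemidef) :
    ((ξ * ξ).trace).re ≤ (Fintype.card a : ℝ) * ((ptraceFst ξ * ptraceFst ξ).trace).re := by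
  classical
  have hpair := hξ.trace_mul_nonneg hξ.card_smul_one_kronecker_ptraceFst_sub
  rw [Matrix.mul_sub, trace_sub, Matrix.mul_smul, trace_smul, trace_mul_one_kronecker] at hpair
  have hre := (Complex.nonneg_iff.mp hpair).1
  rw [smul_eq_mul, Complex.sub_re, ← Complex.ofReal_natCast, Complex.re_ofReal_mul] at hre
  linarith
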